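/- arXiv:1710.03695 — 5 statements merged into one kernel-verified Lean document; each statement's English description precedes it below -/
import Mathlib

section
/- For F = f + h with f μ-strongly convex and L-smooth and h convex, and any x, y ∈ ℝⁿ: F(y^+) + ⟨G_L(y), x − y⟩ + (μ/2)‖x − y‖² + (1/(2L))‖G_L(y)‖² ≤ F(x), where y^+ = y − (1/L)G_L(y) and G_L is the proximal gradient. -/
/-!
The prox point `p` of `v = y - (1/L) ∇f(y)` satisfies the first-order condition
`L (v - p) ∈ ∂h(p)`, i.e. `G_L(y) - ∇f(y)` is a subgradient of `h` at `y⁺ = p`; convexity gives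
this by comparing `p` with `p + t (x - p)`, dividing by `t` and letting `t → 0⁺`. Adding this
subgradient inequality at `x`, strong convexity of `f` between `x` and `y`, and smoothness of `f`
between `y⁺` and `y` gives the bound, because `⟪G_L(y), y - y⁺⟫ = L ‖y - y⁺‖² = ‖G_L(y)‖² / L`.
-/

open Set Filter Topology
open scoped InnerProductSpace

variable {E : Type*} [NormedAddCommGroup E] [InnerProductSpace ℝ E]

theorem ConvexOn.add_inner_le_of_isMinOn_prox {h : E → ℝ} (hh : ConvexOn ℝ univ h) {c : ℝ}
    {v p : E} (hp : IsMinOn (fun u => h u + c / 2 * ‖v - u‖ ^ 2) univ p) (x : E) :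
    h p + ⟪c • (v - p), x - p⟫_ℝ ≤ h x := by
  have hstep : ∀ t ∈ Ioo (0 : ℝ) 1,
      h p + ⟪c • (v - p), x - p⟫_ℝ ≤ h x + t * (c / 2 * ‖x - p‖ ^ 2) := by
    rintro t ⟨ht0, ht1⟩
    have hconv : h (p + t • (x - p)) ≤ (1 - t) * h p + t * h x := by
      rw [show p + t • (x - p) = (1 - t) • p + t • x by module]
      exact hh.2 (mem_univ p) (mem_univ x) (sub_nonneg.2 ht1.le) ht0.le (by ring)
    have hnorm : c / 2 * ‖v - (p + t • (x - p))‖ ^ 2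
        = c / 2 * ‖v - p‖ ^ 2 - t * ⟪c • (v - p), x - p⟫_ℝ + t ^ 2 * (c / 2 * ‖x - p‖ ^ 2) := by
      rw [← sub_sub, norm_sub_sq_real, real_inner_smul_right, real_inner_smul_left, norm_smul,
        Real.norm_eq_abs, mul_pow, sq_abs]
      ring
    have hmin := isMinOn_univ_iff.1 hp (p + t • (x - p))
    simp only [hnorm] at hmin
    have hscaled :
        t * (h p + ⟪c • (v - p), x - p⟫_ℝ) ≤ t * (h x + t * (c / 2 * ‖x - p‖ ^ 2)) := by
      linarith
    exact le_of_mul_le_mul_left hscaled ht0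
  have hlim : Tendsto (fun t : ℝ => h x + t * (c / 2 * ‖x - p‖ ^ 2)) (𝓝[>] 0) (𝓝 (h x)) := by
    refine tendsto_nhdsWithin_of_tendsto_nhds ?_
    simpa using (tendsto_const_nhds (x := h x)).add
      ((tendsto_id (x := 𝓝 (0 : ℝ))).mul_const (c / 2 * ‖x - p‖ ^ 2))
  exact ge_of_tendsto hlim (eventually_of_mem (Ioo_mem_nhdsGT one_pos) hstep)

theorem composite_le_of_subgradient {f h : E → ℝ} {μ L : ℝ} {x y p gy : E}
    (hsc : f y + ⟪gy, x - y⟫_ℝ + μ / 2 * ‖x - y‖ ^ 2 ≤ f x)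
    (hsm : f p ≤ f y + ⟪gy, p - y⟫_ℝ + L / 2 * ‖p - y‖ ^ 2)
    (hsub : h p + ⟪L • (y - p) - gy, x - p⟫_ℝ ≤ h x) :
    f p + h p + ⟪L • (y - p), x - y⟫_ℝ + μ / 2 * ‖x - y‖ ^ 2 + L / 2 * ‖y - p‖ ^ 2
      ≤ f x + h x := by
  have hsplit : ⟪L • (y - p) - gy, x - p⟫_ℝ
      = ⟪L • (y - p), x - y⟫_ℝ + L * ‖y - p‖ ^ 2 - ⟪gy, x - y⟫_ℝ - ⟪gy, y - p⟫_ℝ := by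
    rw [show x - p = (x - y) + (y - p) by abel, inner_sub_left, inner_add_right, inner_add_right]
    simp only [real_inner_smul_left, real_inner_self_eq_norm_sq]
    ring
  have hflip : ⟪gy, p - y⟫_ℝ = -⟪gy, y - p⟫_ℝ := by rw [← inner_neg_right, neg_sub]
  rw [norm_sub_rev] at hsm
  linarith

theorem composite_lower_bound_general {n : ℕ}
    (f h : EuclideanSpace ℝ (Fin n) → ℝ)
    (g : EuclideanSpace ℝ (Fin n) → EuclideanSpace ℝ (Fin n))  -- gradient of f
    (μ L : ℝ) (hL : 0 < L)
    (hsc : ∀ x y, f y + ⟪g y, x - y⟫_ℝ + μ / 2 * ‖x - y‖ ^ 2 ≤ f x)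
    (hsm : ∀ x y, f x ≤ f y + ⟪g y, x - y⟫_ℝ + L / 2 * ‖x - y‖ ^ 2)
    (hconv : ConvexOn ℝ Set.univ h)
    (P : EuclideanSpace ℝ (Fin n) → EuclideanSpace ℝ (Fin n))  -- prox map
    (hP : ∀ y u, h (P y) + L / 2 * ‖(y - (1 / L) • g y) - P y‖ ^ 2
               ≤ h u + L / 2 * ‖(y - (1 / L) • g y) - u‖ ^ 2) :
    ∀ x y, (f (y - (1 / L) • (L • (y - P y))) + h (y - (1 / L) • (L • (y - P y))))
        + ⟪L • (y - P y), x - y⟫_ℝ + μ / 2 * ‖x - y‖ ^ 2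
        + 1 / (2 * L) * ‖L • (y - P y)‖ ^ 2 ≤ f x + h x := by
  intro x y
  have hy_plus : y - (1 / L) • (L • (y - P y)) = P y := by
    rw [smul_smul, one_div_mul_cancel hL.ne', one_smul, sub_sub_cancel]
  have hG_sq : 1 / (2 * L) * ‖L • (y - P y)‖ ^ 2 = L / 2 * ‖y - P y‖ ^ 2 := by
    rw [norm_smul, Real.norm_eq_abs, mul_pow, sq_abs]
    field_simp
  have hsub : h (P y) + ⟪L • (y - P y) - g y, x - P y⟫_ℝ ≤ h x := by
    have hprox := hconv.add_inner_le_of_isMinOn_prox (isMinOn_univ_iff.2 (hP y)) x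
    rwa [sub_right_comm, smul_sub, smul_smul, mul_one_div_cancel hL.ne', one_smul] at hprox
  rw [hy_plus, hG_sq]
  exact composite_le_of_subgradient (hsc x y) (hsm (P y) y) hsub

/-- the composite lower bound for F = f + h with f μ-strongly convex and
L-smooth and h convex, where G y = L•(y − prox point) is the proximal gradient and
y⁺ = y − (1/L)•G y. -/
theorem composite_lower_bound {n : ℕ}
    (f h : EuclideanSpace ℝ (Fin n) → ℝ)
    (g : EuclideanSpace ℝ (Fin n) → EuclideanSpace ℝ (Fin n))  -- gradient of f
    (μ L : ℝ) (hμ : 0 < μ) (hL : 0 < L)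
    (hsc : ∀ x y, f y + ⟪g y, x - y⟫_ℝ + μ / 2 * ‖x - y‖ ^ 2 ≤ f x)
    (hsm : ∀ x y, f x ≤ f y + ⟪g y, x - y⟫_ℝ + L / 2 * ‖x - y‖ ^ 2)
    (hconv : ConvexOn ℝ Set.univ h)
    (P : EuclideanSpace ℝ (Fin n) → EuclideanSpace ℝ (Fin n))  -- prox map
    (hP : ∀ y u, h (P y) + L / 2 * ‖(y - (1 / L) • g y) - P y‖ ^ 2
               ≤ h u + L / 2 * ‖(y - (1 / L) • g y) - u‖ ^ 2) :
    ∀ x y, (f (y - (1 / L) • (L • (y - P y))) + h (y - (1 / L) • (L • (y - P y))))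
        + ⟪L • (y - P y), x - y⟫_ℝ + μ / 2 * ‖x - y‖ ^ 2
        + 1 / (2 * L) * ‖L • (y - P y)‖ ^ 2 ≤ f x + h x :=
  composite_lower_bound_general f h g μ L hL hsc hsm hconv P hP
end

section
/- Let f be μ-strongly convex and L-smooth, α = μ/L, x_{k+1} = x_k − (1/L)∇f(x_k), and φ*_{k+1} = (1−α)(φ*_k + α(μ/2)‖v_k − x_k^{++}‖²) + α(f(x_k) − (1/(2μ))‖∇f(x_k)‖²) where x_k^{++} = x_k − (1/μ)∇f(x_k). Then f(x_{k+1}) − φ*_{k+1} ≤ (1−μ/L)(f(x_k) − φ*_k). -/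
/-!
The smoothness upper bound at the gradient step gives the descent lemma
`f x⁺ ≤ f x - ‖∇f x‖² / (2L)`, and `α / (2μ) = 1 / (2L)` for `α = μ / L`; after these two
substitutions the claim reduces to `0 ≤ (1 - α) α (μ / 2) ‖v - x⁺⁺‖²`.
-/

open scoped InnerProductSpace

theorem gradient_step_descent {E : Type*} [NormedAddCommGroup E] [InnerProductSpace ℝ E]
    {f : E → ℝ} {g : E → E} {L : ℝ}
    (hsm : ∀ x y, f x ≤ f y + ⟪g y, x - y⟫_ℝ + L / 2 * ‖x - y‖ ^ 2) (x : E) :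
    f (x - (1 / L) • g x) ≤ f x - 1 / (2 * L) * ‖g x‖ ^ 2 := by
  have h := hsm (x - (1 / L) • g x) x
  rw [sub_sub_cancel_left, inner_neg_right, real_inner_smul_right, real_inner_self_eq_norm_sq,
    norm_neg, norm_smul, Real.norm_eq_abs, mul_pow, sq_abs] at h
  convert h using 1
  field_simp
  ring

theorem suesa_contraction_general {n : ℕ}
    (f : EuclideanSpace ℝ (Fin n) → ℝ)
    (g : EuclideanSpace ℝ (Fin n) → EuclideanSpace ℝ (Fin n))  -- gradient of f
    (μ L : ℝ) (hμ : 0 < μ) (hμL : μ ≤ L)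
    (hsm : ∀ x y, f x ≤ f y + ⟪g y, x - y⟫_ℝ + L / 2 * ‖x - y‖ ^ 2)
    (xk vk : EuclideanSpace ℝ (Fin n)) (φk : ℝ) :
    f (xk - (1 / L) • g xk)
      - ((1 - μ / L) * (φk + (μ / L) * (μ / 2) * ‖vk - (xk - (1 / μ) • g xk)‖ ^ 2)
          + (μ / L) * (f xk - 1 / (2 * μ) * ‖g xk‖ ^ 2))
    ≤ (1 - μ / L) * (f xk - φk) := by
  have hL : 0 < L := hμ.trans_le hμL
  have hdescent := gradient_step_descent hsm xk
  have hα : μ / L * (1 / (2 * μ)) = 1 / (2 * L) := by field_simp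
  have hgap : 0 ≤ (1 - μ / L) * (μ / L * (μ / 2) * ‖vk - (xk - (1 / μ) • g xk)‖ ^ 2) :=
    mul_nonneg (sub_nonneg.2 ((div_le_one hL).2 hμL)) (by positivity)
  linear_combination hdescent + hgap + ‖g xk‖ ^ 2 * hα

/-- per-iteration contraction of SUESA with α = μ/L. -/
theorem suesa_contraction {n : ℕ}
    (f : EuclideanSpace ℝ (Fin n) → ℝ)
    (g : EuclideanSpace ℝ (Fin n) → EuclideanSpace ℝ (Fin n))  -- gradient of f
    (μ L : ℝ) (hμ : 0 < μ) (hμL : μ ≤ L)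
    (hsc : ∀ x y, f y + ⟪g y, x - y⟫_ℝ + μ / 2 * ‖x - y‖ ^ 2 ≤ f x)
    (hsm : ∀ x y, f x ≤ f y + ⟪g y, x - y⟫_ℝ + L / 2 * ‖x - y‖ ^ 2)
    (xk vk : EuclideanSpace ℝ (Fin n)) (φk : ℝ) :
    f (xk - (1 / L) • g xk)
      - ((1 - μ / L) * (φk + (μ / L) * (μ / 2) * ‖vk - (xk - (1 / μ) • g xk)‖ ^ 2)
          + (μ / L) * (f xk - 1 / (2 * μ) * ‖g xk‖ ^ 2))
    ≤ (1 - μ / L) * (f xk - φk) :=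
  suesa_contraction_general f g μ L hμ hμL hsm xk vk φk
end

section
/- Let f be μ-strongly convex and L-smooth, α = √(μ/L), β = 1/(1+α), y_k = βx_k + (1−β)v_k, x_{k+1} = y_k − (1/L)∇f(y_k), and φ*_{k+1} = (1−α)(φ*_k + α(μ/2)‖v_k − y_k^{++}‖²) + α(f(y_k) − (1/(2μ))‖∇f(y_k)‖²) with y_k^{++} = y_k − (1/μ)∇f(y_k). If φ*_k is any real number and f is convex, then f(x_{k+1}) − φ*_{k+1} ≤ (1 − √(μ/L))(f(x_k) − φ*_k). -/
open scoped InnerProductSpace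

/-- per-iteration contraction of ASUESA with α = √(μ/L), β = 1/(1+α). -/
theorem asuesa_contraction {n : ℕ}
    (f : EuclideanSpace ℝ (Fin n) → ℝ)
    (g : EuclideanSpace ℝ (Fin n) → EuclideanSpace ℝ (Fin n))  -- gradient of f
    (μ L : ℝ) (hμ : 0 < μ) (hμL : μ ≤ L)
    (hconv : ∀ x y, f y + ⟪g y, x - y⟫_ℝ ≤ f x)
    (hsc : ∀ x y, f y + ⟪g y, x - y⟫_ℝ + μ / 2 * ‖x - y‖ ^ 2 ≤ f x)
    (hsm : ∀ x y, f x ≤ f y + ⟪g y, x - y⟫_ℝ + L / 2 * ‖x - y‖ ^ 2)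
    (xk vk : EuclideanSpace ℝ (Fin n)) (φk : ℝ)
    (α β : ℝ) (hαdef : α = Real.sqrt (μ / L)) (hβdef : β = 1 / (1 + α))
    (yk : EuclideanSpace ℝ (Fin n)) (hyk : yk = β • xk + (1 - β) • vk) :
    f (yk - (1 / L) • g yk)
      - ((1 - α) * (φk + α * (μ / 2) * ‖vk - (yk - (1 / μ) • g yk)‖ ^ 2)
          + α * (f yk - 1 / (2 * μ) * ‖g yk‖ ^ 2))
    ≤ (1 - Real.sqrt (μ / L)) * (f xk - φk) := by
  have hL : 0 < L := lt_of_lt_of_le hμ hμL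
  have hα0 : 0 < α := by rw [hαdef]; positivity
  have hα1 : α ≤ 1 := by
    rw [hαdef, show (1:ℝ) = Real.sqrt 1 by simp]
    exact Real.sqrt_le_sqrt (by rw [div_le_one hL]; exact hμL)
  have hα2 : α ^ 2 * L = μ := by
    rw [hαdef, Real.sq_sqrt (by positivity)]
    field_simp
  rw [← hαdef]
  set G := ‖g yk‖ ^ 2 with hGdef
  have hGnn : 0 ≤ G := by positivity
  set A := ⟪g yk, xk - yk⟫_ℝ with hAdef
  set I := ⟪g yk, vk - yk⟫_ℝ with hIdef
  set V := ‖vk - yk‖ ^ 2 with hVdef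
  have hVnn : 0 ≤ V := by positivity
  have h1mα : (0:ℝ) ≤ 1 - α := by linarith
  -- smoothness step
  have h1 : f (yk - (1 / L) • g yk) ≤ f yk - 1 / (2 * L) * G := by
    have h := hsm (yk - (1 / L) • g yk) yk
    have hd : (yk - (1 / L) • g yk) - yk = -((1 / L) • g yk) := by abel
    rw [hd, inner_neg_right, real_inner_smul_right, real_inner_self_eq_norm_sq,
      norm_neg, norm_smul, Real.norm_eq_abs, abs_of_pos (by positivity : (0:ℝ) < 1 / L),
      mul_pow] at h
    have h1a : 1 / L * ‖g yk‖ ^ 2 - L / 2 * ((1 / L) ^ 2 * ‖g yk‖ ^ 2) = 1 / (2 * L) * G := by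
      rw [hGdef]; field_simp; ring
    linarith [h, h1a]
  -- convexity step
  have h2 : f yk + A ≤ f xk := hconv xk yk
  -- relation between inner products
  have h4 : α * I = -A := by
    have hvec : (1 - β) • (vk - yk) + β • (xk - yk) = 0 := by
      rw [hyk]; module
    have hrel : (1 - β) * I + β * A = 0 := by
      have h0 := congrArg (fun z => ⟪g yk, z⟫_ℝ) hvec
      rw [inner_add_right, real_inner_smul_right, real_inner_smul_right, inner_zero_right] at h0
      rw [hIdef, hAdef]; exact h0
    have h1pα : (1:ℝ) + α ≠ 0 := by positivity
    rw [hβdef] at hrel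
    field_simp at hrel
    linarith
  -- norm expansion
  have h3 : ‖vk - (yk - (1 / μ) • g yk)‖ ^ 2 = V + 2 / μ * I + 1 / μ ^ 2 * G := by
    have hd : vk - (yk - (1 / μ) • g yk) = (vk - yk) + (1 / μ) • g yk := by abel
    rw [hd, norm_add_sq_real, real_inner_smul_right, real_inner_comm, norm_smul,
      Real.norm_eq_abs, abs_of_pos (by positivity : (0:ℝ) < 1 / μ), mul_pow]
    rw [hVdef, hIdef, hGdef]; ring
  rw [h3]
  -- scalar identities
  have eI : (1 - α) * (α * (μ / 2) * (2 / μ * I)) = -((1 - α) * A) := by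
    have hμne := hμ.ne'
    have : α * (μ / 2) * (2 / μ * I) = α * I := by field_simp
    rw [this, h4]; ring
  have eG : α * (1 / (2 * μ) * G) - (1 - α) * (α * (μ / 2) * (1 / μ ^ 2 * G)) = 1 / (2 * L) * G := by
    have hμne := hμ.ne'
    have hLne := hL.ne'
    field_simp
    linear_combination (‖g yk‖ ^ 2) * hα2
  have eV : 0 ≤ (1 - α) * (α * (μ / 2) * V) := by positivity
  have h2' : (1 - α) * (f yk + A) ≤ (1 - α) * f xk :=
    mul_le_mul_of_nonneg_left h2 h1mα
  linarith [h1, h2', eI, eG, eV]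
end

section
/- Let F = f + h with f μ-strongly convex and L-smooth and h convex, α = μ/L, x_{k+1} = x_k − (1/L)G_L(x_k), and φ*_{k+1} = (1−α)(φ*_k + α(μ/2)‖v_k − x_k^{++}‖²) + α(F(x_{k+1}) + (1/(2L) − 1/(2μ))‖G_L(x_k)‖²), where x_k^{++} = x_k − (1/μ)G_L(x_k). Then F(x_{k+1}) − φ*_{k+1} ≤ (1 − μ/L)(F(x_k) − φ*_k). -/
open scoped InnerProductSpace

/-!
Taking `u = x` in the composite lower bound gives the sufficient-decrease estimate
`F x⁺ + ‖G x‖² / (2L) ≤ F x`. With `α = μ/L` one has `α (1/(2L) - 1/(2μ)) = -(1 - α)/(2L)`, so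
the new gap `F x⁺ - φ⁺` equals `(1 - α) (F x⁺ + ‖G x‖²/(2L) - φ) - (1 - α) α (μ/2) ‖v - x⁺⁺‖²`,
and both terms are controlled by `(1 - α) (F x - φ)`.
-/

theorem proxGrad_sufficient_decrease {E : Type*} [NormedAddCommGroup E] [InnerProductSpace ℝ E]
    {F : E → ℝ} {G : E → E} {μ L : ℝ} {x : E}
    (hlb : ∀ u, F (x - (1 / L) • G x) + ⟪G x, u - x⟫_ℝ + μ / 2 * ‖u - x‖ ^ 2
                + 1 / (2 * L) * ‖G x‖ ^ 2 ≤ F u) :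
    F (x - (1 / L) • G x) + 1 / (2 * L) * ‖G x‖ ^ 2 ≤ F x := by
  simpa using hlb x

theorem cuesa_gap_le {μ L A B φ g Q : ℝ} (hμ : 0 < μ) (hμL : μ ≤ L)
    (hdesc : A + 1 / (2 * L) * g ≤ B) (hQ : 0 ≤ Q) :
    A - ((1 - μ / L) * (φ + μ / L * (μ / 2) * Q) + μ / L * (A + (1 / (2 * L) - 1 / (2 * μ)) * g))
      ≤ (1 - μ / L) * (B - φ) := by
  have hL : 0 < L := hμ.trans_le hμL
  have hα : 0 ≤ 1 - μ / L := sub_nonneg.2 ((div_le_one hL).2 hμL)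
  have hgap : A - ((1 - μ / L) * (φ + μ / L * (μ / 2) * Q)
        + μ / L * (A + (1 / (2 * L) - 1 / (2 * μ)) * g))
      = (1 - μ / L) * (A + 1 / (2 * L) * g - φ) - (1 - μ / L) * (μ / L * (μ / 2) * Q) := by
    field_simp
    ring
  have hdist : 0 ≤ (1 - μ / L) * (μ / L * (μ / 2) * Q) := by
    have := hμ.le
    positivity
  calc _ = (1 - μ / L) * (A + 1 / (2 * L) * g - φ) - (1 - μ / L) * (μ / L * (μ / 2) * Q) := hgap
    _ ≤ (1 - μ / L) * (A + 1 / (2 * L) * g - φ) := sub_le_self _ hdist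
    _ ≤ (1 - μ / L) * (B - φ) := by gcongr

/-- per-iteration contraction of CUESA with α = μ/L, for F = f + h
satisfying the composite lower bound with proximal gradient G. -/
theorem cuesa_contraction {n : ℕ}
    (F : EuclideanSpace ℝ (Fin n) → ℝ)
    (G : EuclideanSpace ℝ (Fin n) → EuclideanSpace ℝ (Fin n))  -- proximal gradient
    (μ L : ℝ) (hμ : 0 < μ) (hμL : μ ≤ L)
    (hlb : ∀ u x, F (x - (1 / L) • G x) + ⟪G x, u - x⟫_ℝ + μ / 2 * ‖u - x‖ ^ 2
                + 1 / (2 * L) * ‖G x‖ ^ 2 ≤ F u)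
    (xk vk : EuclideanSpace ℝ (Fin n)) (φk : ℝ) :
    F (xk - (1 / L) • G xk)
      - ((1 - μ / L) * (φk + (μ / L) * (μ / 2) * ‖vk - (xk - (1 / μ) • G xk)‖ ^ 2)
          + (μ / L) * (F (xk - (1 / L) • G xk)
              + (1 / (2 * L) - 1 / (2 * μ)) * ‖G xk‖ ^ 2))
    ≤ (1 - μ / L) * (F xk - φk) :=
  cuesa_gap_le hμ hμL (proxGrad_sufficient_decrease (fun u => hlb u xk)) (sq_nonneg _)
end

section
/- Let F = f + h with f μ-strongly convex and L-smooth and h convex, α = √(μ/L), β = 1/(1+α), y_k = βx_k + (1−β)v_k, x_{k+1} = y_k − (1/L)G_L(y_k), and φ*_{k+1} = (1−α)(φ*_k + α(μ/2)‖v_k − y_k^{++}‖²) + α(F(x_{k+1}) + (1/(2L) − 1/(2μ))‖G_L(y_k)‖²), where y_k^{++} = y_k − (1/μ)G_L(y_k). Then F(x_{k+1}) − φ*_{k+1} ≤ (1 − √(μ/L))(F(x_k) − φ*_k). -/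
/-!
Write `r = x - v` and `g = G y`. Since `y = β x + (1 - β) v`, the lower bound at `u = x` reads
`F(x⁺) + (1 - β)⟪g, r⟫ + (μ/2)(1 - β)²‖r‖² + ‖g‖²/(2L) ≤ F(x)`, and `v - y⁺⁺ = g/μ - β r`.
Using `μ = α² L` and `1 - β = α β`, the gap `F(x⁺) - φ⁺` is exactly `(1 - α)` times the left side of
this bound, minus `(1 - α)φ`, minus the nonnegative surplus `(1 - α) α³ L ‖r‖² / (2(1 + α))`.
-/

open scoped InnerProductSpace

section Extrapolation

variable {E : Type*} [NormedAddCommGroup E] [InnerProductSpace ℝ E]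

lemma sub_convex_comb_eq_smul (x v : E) (β : ℝ) :
    x - (β • x + (1 - β) • v) = (1 - β) • (x - v) := by
  module

lemma norm_sub_convex_comb_sub_smul_sq (x v g : E) (β c : ℝ) :
    ‖v - (β • x + (1 - β) • v - c • g)‖ ^ 2
      = c ^ 2 * ‖g‖ ^ 2 - 2 * (c * β) * ⟪g, x - v⟫_ℝ + β ^ 2 * ‖x - v‖ ^ 2 := by
  have hvec : v - (β • x + (1 - β) • v - c • g) = c • g - β • (x - v) := by module
  rw [hvec, norm_sub_sq_real, norm_smul, norm_smul, real_inner_smul_left, real_inner_smul_right,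
    mul_pow, mul_pow, Real.norm_eq_abs, Real.norm_eq_abs, sq_abs, sq_abs]
  ring

lemma lowerBound_at_convex_comb {F : E → ℝ} {g xnext : E} {μ L : ℝ}
    (x v : E) (β : ℝ)
    (hlb : F xnext + ⟪g, x - (β • x + (1 - β) • v)⟫_ℝ + μ / 2 * ‖x - (β • x + (1 - β) • v)‖ ^ 2
      + 1 / (2 * L) * ‖g‖ ^ 2 ≤ F x) :
    F xnext + (1 - β) * ⟪g, x - v⟫_ℝ + μ / 2 * ((1 - β) ^ 2 * ‖x - v‖ ^ 2)
      + 1 / (2 * L) * ‖g‖ ^ 2 ≤ F x := by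
  rwa [sub_convex_comb_eq_smul, real_inner_smul_right, norm_smul, mul_pow, Real.norm_eq_abs,
    sq_abs] at hlb

end Extrapolation

lemma acuesa_gap_le_of_lowerBound {α β μ L P Q φ s D Γ : ℝ}
    (hL : 0 < L) (hα0 : 0 < α) (hα1 : α ≤ 1) (hμ : μ = α ^ 2 * L) (hβ : β = 1 / (1 + α)) (hD : 0 ≤ D)
    (hlb : P + (1 - β) * s + μ / 2 * ((1 - β) ^ 2 * D) + 1 / (2 * L) * Γ ≤ Q) :
    P - ((1 - α) * (φ + α * (μ / 2) * ((1 / μ) ^ 2 * Γ - 2 * (1 / μ * β) * s + β ^ 2 * D))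
        + α * (P + (1 / (2 * L) - 1 / (2 * μ)) * Γ))
      ≤ (1 - α) * (Q - φ) := by
  subst hμ hβ
  have hgap : P - ((1 - α) * (φ + α * (α ^ 2 * L / 2) * ((1 / (α ^ 2 * L)) ^ 2 * Γ
          - 2 * (1 / (α ^ 2 * L) * (1 / (1 + α))) * s + (1 / (1 + α)) ^ 2 * D))
        + α * (P + (1 / (2 * L) - 1 / (2 * (α ^ 2 * L))) * Γ)) - (1 - α) * (Q - φ)
      = (1 - α) * (P + (1 - 1 / (1 + α)) * s + α ^ 2 * L / 2 * ((1 - 1 / (1 + α)) ^ 2 * D)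
          + 1 / (2 * L) * Γ - Q)
        - (1 - α) * α ^ 3 * L / (2 * (1 + α)) * D := by
    field_simp
    ring
  have hscaled := mul_nonpos_of_nonneg_of_nonpos (sub_nonneg.mpr hα1) (sub_nonpos.mpr hlb)
  have hsurplus : 0 ≤ (1 - α) * α ^ 3 * L / (2 * (1 + α)) * D := by
    have := sub_nonneg.mpr hα1
    positivity
  linarith

/-- per-iteration contraction of ACUESA with α = √(μ/L), β = 1/(1+α). -/
theorem acuesa_contraction {n : ℕ}
    (F : EuclideanSpace ℝ (Fin n) → ℝ)
    (G : EuclideanSpace ℝ (Fin n) → EuclideanSpace ℝ (Fin n))  -- proximal gradient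
    (μ L : ℝ) (hμ : 0 < μ) (hμL : μ ≤ L)
    (hlb : ∀ u y, F (y - (1 / L) • G y) + ⟪G y, u - y⟫_ℝ + μ / 2 * ‖u - y‖ ^ 2
                + 1 / (2 * L) * ‖G y‖ ^ 2 ≤ F u)
    (xk vk : EuclideanSpace ℝ (Fin n)) (φk : ℝ)
    (α β : ℝ) (hαdef : α = Real.sqrt (μ / L)) (hβdef : β = 1 / (1 + α))
    (yk : EuclideanSpace ℝ (Fin n)) (hyk : yk = β • xk + (1 - β) • vk) :
    F (yk - (1 / L) • G yk)
      - ((1 - α) * (φk + α * (μ / 2) * ‖vk - (yk - (1 / μ) • G yk)‖ ^ 2)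
          + α * (F (yk - (1 / L) • G yk)
              + (1 / (2 * L) - 1 / (2 * μ)) * ‖G yk‖ ^ 2))
    ≤ (1 - Real.sqrt (μ / L)) * (F xk - φk) := by
  have hL : 0 < L := hμ.trans_le hμL
  have hratio : 0 < μ / L := div_pos hμ hL
  have hα0 : 0 < α := hαdef ▸ Real.sqrt_pos.mpr hratio
  have hα1 : α ≤ 1 := hαdef ▸ Real.sqrt_le_one.mpr ((div_le_one hL).mpr hμL)
  have hμα : μ = α ^ 2 * L := by
    rw [hαdef, Real.sq_sqrt hratio.le, div_mul_cancel₀ _ hL.ne']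
  subst hyk
  have hlbx := lowerBound_at_convex_comb xk vk β (hlb xk _)
  rw [← hαdef, norm_sub_convex_comb_sub_smul_sq]
  exact acuesa_gap_le_of_lowerBound hL hα0 hα1 hμα hβdef (sq_nonneg _) hlbx
end
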